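/- arXiv:1406.3794 — 7 statements merged into one kernel-verified Lean document; each statement's English description precedes it below -/
import Mathlib

section
/- Let A be a finite abelian group, p a prime not dividing |A|, s ≥ 1, and a ∈ A. If S(a) = S(-a) and a ≠ -a (type II class), then the cardinality of S(a) is even; moreover, if |S(a)| = 2ν, then -a = p^{sν}·a. -/
/-!
`S(a)` is the forward orbit of `a` under `x ↦ p^s • x`. If `-a = p^{sj} • a`, then applying
`p^{sj} •` once more gives back `a`, as it commutes with negation; so `a` lies on a cycle whose
length `d = |S(a)|` divides `2j`. Reducing `j` modulo `d` gives `0 < j < d` (as `a ≠ -a`),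
hence `2j = d`.
-/

namespace Function

variable {α : Type*} {f : α → α} {x : α}

theorem range_iterate_eq_image_Iio_minimalPeriod (hx : x ∈ periodicPts f) :
    Set.range (fun n => f^[n] x) = (fun n => f^[n] x) '' Set.Iio (minimalPeriod f x) := by
  refine subset_antisymm ?_ (Set.image_subset_range _ _)
  rintro _ ⟨n, rfl⟩
  exact ⟨n % minimalPeriod f x, Nat.mod_lt _ (minimalPeriod_pos_of_mem_periodicPts hx),
    iterate_mod_minimalPeriod_eq⟩

theorem ncard_range_iterate (hx : x ∈ periodicPts f) :
    (Set.range fun n => f^[n] x).ncard = minimalPeriod f x := by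
  rw [range_iterate_eq_image_Iio_minimalPeriod hx, iterate_injOn_Iio_minimalPeriod.ncard_image,
    ← Finset.coe_range, Set.ncard_coe_finset, Finset.card_range]

theorem exists_minimalPeriod_eq_two_mul_of_involutive {σ : α → α} (hσ : Involutive σ)
    (hcomm : Function.Commute f σ) (hx : σ x ≠ x) {j : ℕ} (hj : σ x = f^[j] x) :
    ∃ k, 0 < k ∧ minimalPeriod f x = 2 * k ∧ σ x = f^[k] x := by
  have double : ∀ {i}, σ x = f^[i] x → IsPeriodicPt f (2 * i) x := fun {i} hi => by
    rw [IsPeriodicPt, IsFixedPt, two_mul, iterate_add_apply, ← hi,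
      (hcomm.iterate_left i).eq x, ← hi, hσ x]
  have nonzero : ∀ {i}, σ x = f^[i] x → i ≠ 0 := by
    rintro _ hi rfl
    exact hx hi
  have hperiodic : x ∈ periodicPts f :=
    mk_mem_periodicPts (by have := nonzero hj; omega) (double hj)
  set d := minimalPeriod f x
  have hd : 0 < d := minimalPeriod_pos_of_mem_periodicPts hperiodic
  have hk : σ x = f^[j % d] x := by rw [iterate_mod_minimalPeriod_eq, hj]
  have hlt : j % d < d := Nat.mod_lt _ hd
  have hpos : j % d ≠ 0 := nonzero hk
  refine ⟨j % d, Nat.pos_of_ne_zero hpos, ?_, hk⟩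
  obtain ⟨c, hc⟩ := (double hk).minimalPeriod_dvd
  obtain _ | _ | c := c
  · omega
  · omega
  · nlinarith

end Function

theorem cyclotomic_class_typeII_general (A : Type*) [AddCommGroup A]
    (p : ℕ)
    (s : ℕ) (a : A)
    (hSa : {b : A | ∃ i : ℕ, b = p ^ (s * i) • a} =
           {b : A | ∃ i : ℕ, b = p ^ (s * i) • (-a)})
    (hne : a ≠ -a) :
    Even (Set.ncard {b : A | ∃ i : ℕ, b = p ^ (s * i) • a}) ∧
    ∀ ν : ℕ, Set.ncard {b : A | ∃ i : ℕ, b = p ^ (s * i) • a} = 2 * ν →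
      -a = p ^ (s * ν) • a := by
  have hiter : ∀ i, (p ^ s • · : A → A)^[i] a = p ^ (s * i) • a := fun i => by
    rw [smul_iterate, pow_mul]
  have hclass : {b : A | ∃ i : ℕ, b = p ^ (s * i) • a} =
      Set.range fun i => (p ^ s • · : A → A)^[i] a := by
    ext b
    simp only [Set.mem_ofPred_eq, Set.mem_range, hiter, eq_comm]
  obtain ⟨j, hj⟩ : -a ∈ {b : A | ∃ i : ℕ, b = p ^ (s * i) • a} := hSa ▸ ⟨0, by simp⟩
  obtain ⟨k, hkpos, hperiod, hk⟩ := Function.exists_minimalPeriod_eq_two_mul_of_involutive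
    (σ := Neg.neg) neg_involutive (fun x : A => smul_neg (p ^ s) x) hne.symm
    (hj.trans (hiter j).symm)
  have hcard : Set.ncard {b : A | ∃ i : ℕ, b = p ^ (s * i) • a} = 2 * k := by
    rw [hclass, Function.ncard_range_iterate, hperiod]
    exact Function.minimalPeriod_pos_iff_mem_periodicPts.mp (by rw [hperiod]; omega)
  refine ⟨hcard ▸ even_two_mul k, fun ν hν => ?_⟩
  obtain rfl : ν = k := by omega
  rw [hk, hiter]

/-- If the `p^s`-cyclotomic class of `a` satisfies `S(a) = S(-a)` and `a ≠ -a`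
(type II), then its cardinality is even, and if `|S(a)| = 2ν` then
`-a = p^{sν}·a`. -/
theorem cyclotomic_class_typeII (A : Type*) [AddCommGroup A] [Fintype A]
    (p : ℕ) (hp : p.Prime) (hpA : ¬ p ∣ Fintype.card A)
    (s : ℕ) (hs : 1 ≤ s) (a : A)
    (hSa : {b : A | ∃ i : ℕ, b = p ^ (s * i) • a} =
           {b : A | ∃ i : ℕ, b = p ^ (s * i) • (-a)})
    (hne : a ≠ -a) :
    Even (Set.ncard {b : A | ∃ i : ℕ, b = p ^ (s * i) • a}) ∧
    ∀ ν : ℕ, Set.ncard {b : A | ∃ i : ℕ, b = p ^ (s * i) • a} = 2 * ν →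
      -a = p ^ (s * ν) • a :=
  cyclotomic_class_typeII_general A p s a hSa hne
end

section
/- Let q be a prime power, A a finite abelian group with gcd(|A|, q^2) = 1, and h ∈ A, h ≠ 0. Then S_{q^2}(h) ≠ S_{q^2}(-q·h) if and only if (ord(h), q) is evenly good or bad; equivalently, S_{q^2}(h) = S_{q^2}(-q·h) if and only if ord(h) divides q^t + 1 for some odd positive integer t. -/
/-!
Two classes `{g^i • x}` and `{g^i • y}` coincide exactly when each generator lies in the
other's class. Here `h = q^{2i} • (q • -h)` says `q^{2i+1} • h = -h`, i.e. `ord h ∣ q^{2i+1} + 1`,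
and this in turn gives `q • -h = q^{2i+2} • h`.
-/

theorem setOf_pow_smul_eq_iff {M α : Type*} [Monoid M] [MulAction M α] (g : M) (x y : α) :
    {b : α | ∃ i : ℕ, b = g ^ i • x} = {b : α | ∃ i : ℕ, b = g ^ i • y} ↔
      (∃ i : ℕ, x = g ^ i • y) ∧ ∃ i : ℕ, y = g ^ i • x := by
  have subset_of_mem {x y : α} (hxy : ∃ i : ℕ, x = g ^ i • y) :
      {b : α | ∃ i : ℕ, b = g ^ i • x} ⊆ {b : α | ∃ i : ℕ, b = g ^ i • y} := by
    obtain ⟨i, rfl⟩ := hxy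
    rintro b ⟨j, rfl⟩
    exact ⟨j + i, by rw [pow_add, mul_smul]⟩
  constructor
  · intro hxy
    have hx : x ∈ {b : α | ∃ i : ℕ, b = g ^ i • x} := ⟨0, by rw [pow_zero, one_smul]⟩
    have hy : y ∈ {b : α | ∃ i : ℕ, b = g ^ i • y} := ⟨0, by rw [pow_zero, one_smul]⟩
    rw [hxy] at hx
    rw [← hxy] at hy
    exact ⟨hx, hy⟩
  · rintro ⟨hxy, hyx⟩
    exact (subset_of_mem hxy).antisymm (subset_of_mem hyx)

theorem addOrderOf_dvd_add_one_iff {A : Type*} [AddGroup A] (h : A) (n : ℕ) :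
    addOrderOf h ∣ n + 1 ↔ n • h = -h := by
  rw [addOrderOf_dvd_iff_nsmul_eq_zero, succ_nsmul, add_eq_zero_iff_eq_neg]

theorem sq_pow_nsmul_nsmul_neg {A : Type*} [AddCommGroup A] (q i : ℕ) (h : A) :
    (q ^ 2) ^ i • (q • -h) = -(q ^ (2 * i + 1) • h) := by
  rw [smul_neg, smul_neg, ← mul_smul, ← pow_mul, ← pow_succ]

theorem cyclotomic_class_typeII'_iff_oddly_good_general (A : Type*) [AddCommGroup A]
    (q : ℕ) (h : A) :
    {b : A | ∃ i : ℕ, b = (q ^ 2) ^ i • h} =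
      {b : A | ∃ i : ℕ, b = (q ^ 2) ^ i • (q • (-h))} ↔
      ∃ t : ℕ, Odd t ∧ addOrderOf h ∣ q ^ t + 1 := by
  rw [setOf_pow_smul_eq_iff]
  constructor
  · rintro ⟨⟨i, hi⟩, -⟩
    rw [sq_pow_nsmul_nsmul_neg, eq_comm, neg_eq_iff_eq_neg] at hi
    exact ⟨2 * i + 1, odd_two_mul_add_one i, (addOrderOf_dvd_add_one_iff h _).2 hi⟩
  · rintro ⟨_, ⟨i, rfl⟩, hdvd⟩
    have hodd : q ^ (2 * i + 1) • h = -h := (addOrderOf_dvd_add_one_iff h _).1 hdvd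
    refine ⟨⟨i, by rw [sq_pow_nsmul_nsmul_neg, hodd, neg_neg]⟩, ⟨i + 1, ?_⟩⟩
    rw [show (q ^ 2) ^ (i + 1) = q * q ^ (2 * i + 1) by ring, mul_smul, hodd, smul_neg]

/-- For `h ≠ 0`, the `q²`-cyclotomic classes satisfy
`S_{q²}(h) = S_{q²}(-q·h)` if and only if `ord(h)` divides `q^t + 1` for some
odd positive integer `t` (i.e. `(ord(h), q)` is oddly good); equivalently,
`S_{q²}(h) ≠ S_{q²}(-q·h)` iff `(ord(h), q)` is evenly good or bad. -/
theorem cyclotomic_class_typeII'_iff_oddly_good (A : Type*) [AddCommGroup A] [Fintype A]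
    (q : ℕ) (hq : IsPrimePow q) (hqA : Nat.gcd (Fintype.card A) (q ^ 2) = 1)
    (h : A) (hh : h ≠ 0) :
    {b : A | ∃ i : ℕ, b = (q ^ 2) ^ i • h} =
      {b : A | ∃ i : ℕ, b = (q ^ 2) ^ i • (q • (-h))} ↔
      ∃ t : ℕ, Odd t ∧ addOrderOf h ∣ q ^ t + 1 :=
  cyclotomic_class_typeII'_iff_oddly_good_general A q h
end

section
/- Let p be a prime, r ≥ 1, and G a finite abelian group. Suppose the group ring (ℤ/p^r ℤ)[G] contains an ideal C such that C equals its Euclidean dual C^⊥ (with respect to the standard bilinear form ⟨∑ α_g Y^g, ∑ β_g Y^g⟩ = ∑ α_g β_g). Then r is even, or p = 2 and |G| is even. -/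
open Matrix AddMonoidAlgebra

/-!
Let `K ≤ G` be the subgroup of elements of order prime to `p`, so that `|K|` is a unit modulo
`p ^ r` and `G ⧸ K` is a `p`-group. Summing coefficients over the cosets of `K` maps `C` onto a
self-dual code in `(ℤ/p^r)^(G ⧸ K)`. The image is isotropic because the sum of the translates of
an element of `C` by `K` lies in `C`. It contains its orthogonal because a vector `w` orthogonal to
it pulls back to a `K`-periodic vector orthogonal to `C`, which therefore lies in `C` and maps to
`|K| w`. For a submodule `A` of `(ℤ/M)^n` one has `|A| |A^⊥| = M^n`, since `(ℤ/M)^n ⧸ A^⊥` and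
`A^⊥` embed into the character groups of `A` and of `(ℤ/M)^n ⧸ A`. Hence `p ^ (r |G ⧸ K|)` is a
square, so `r` or `|G ⧸ K|` is even, and in the second case `p = 2` and `|G|` is even.
-/

abbrev dotOrthogonal {R ι : Type*} [CommSemiring R] [Fintype ι] (A : Submodule R (ι → R)) :
    Submodule R (ι → R) :=
  LinearMap.BilinForm.orthogonal (dotProductBilin R R) A

@[simp]
theorem mem_dotOrthogonal {R ι : Type*} [CommSemiring R] [Fintype ι] {A : Submodule R (ι → R)}
    {v : ι → R} : v ∈ dotOrthogonal A ↔ ∀ u ∈ A, u ⬝ᵥ v = 0 := by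
  simp [LinearMap.BilinForm.mem_orthogonal_iff]

section Counting

theorem card_addMonoidHom_zmod_le (M : ℕ) [NeZero M] (X : Type*) [AddCommGroup X] [Finite X] :
    Nat.card (X →+ ZMod M) ≤ Nat.card X := by
  have := Fintype.ofFinite X
  calc Nat.card (X →+ ZMod M) ≤ Nat.card (AddChar X ℂ) :=
        Nat.card_le_card_of_injective _
          (AddChar.compAddMonoidHom_injective_right _ ZMod.injective_stdAddChar)
    _ = Nat.card X := by simp only [Nat.card_eq_fintype_card, AddChar.card_eq]

theorem card_le_of_injective_linearMap_zmod {M : ℕ} [NeZero M] {X Y : Type*} [AddCommGroup X]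
    [Module (ZMod M) X] [Finite X] {f : Y → X →ₗ[ZMod M] ZMod M} (hf : f.Injective) :
    Nat.card Y ≤ Nat.card X := by
  have := FunLike.finite (X →ₗ[ZMod M] ZMod M)
  calc Nat.card Y ≤ Nat.card (X →ₗ[ZMod M] ZMod M) := Nat.card_le_card_of_injective f hf
    _ = Nat.card (X →+ ZMod M) :=
        Nat.card_congr (AddMonoidHom.toZModLinearMapEquiv M).toEquiv.symm
    _ ≤ Nat.card X := card_addMonoidHom_zmod_le M X

variable {M : ℕ} [NeZero M] {ι : Type*} [Fintype ι] (A : Submodule (ZMod M) (ι → ZMod M))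

theorem card_le_card_mul_card_dotOrthogonal :
    M ^ Nat.card ι ≤ Nat.card A * Nat.card (dotOrthogonal A) := by
  let Φ := ((dotProductBilin (ZMod M) (ZMod M)).domRestrict A).flip
  have hker : LinearMap.ker Φ = dotOrthogonal A := by
    ext v
    simp [Φ, LinearMap.ext_iff]
  calc M ^ Nat.card ι = Nat.card (LinearMap.ker Φ) * Nat.card (LinearMap.range Φ) := by
        rw [← Nat.card_congr Φ.quotKerEquivRange.toEquiv,
          ← Submodule.card_eq_card_quotient_mul_card, Nat.card_fun, Nat.card_zmod]
    _ ≤ Nat.card (LinearMap.ker Φ) * Nat.card A := by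
        gcongr
        exact card_le_of_injective_linearMap_zmod Subtype.val_injective
    _ = Nat.card A * Nat.card (dotOrthogonal A) := by rw [hker, mul_comm]

theorem card_mul_card_dotOrthogonal_le :
    Nat.card A * Nat.card (dotOrthogonal A) ≤ M ^ Nat.card ι := by
  classical
  have : Finite ((ι → ZMod M) ⧸ A) := Finite.of_surjective _ A.mkQ_surjective
  let Ψ (w : dotOrthogonal A) : ((ι → ZMod M) ⧸ A) →ₗ[ZMod M] ZMod M :=
    A.liftQ ((dotProductBilin (ZMod M) (ZMod M)).flip w)
      fun v hv => by simpa using mem_dotOrthogonal.mp w.2 v hv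
  have hΨ : Function.Injective Ψ := by
    intro w w' h
    ext i
    simpa [Ψ] using LinearMap.congr_fun h (Submodule.Quotient.mk (Pi.single i 1))
  calc Nat.card A * Nat.card (dotOrthogonal A)
      ≤ Nat.card A * Nat.card ((ι → ZMod M) ⧸ A) := by
        gcongr
        exact card_le_of_injective_linearMap_zmod hΨ
    _ = M ^ Nat.card ι := by
        rw [← Submodule.card_eq_card_quotient_mul_card, Nat.card_fun, Nat.card_zmod]

theorem card_mul_card_dotOrthogonal :
    Nat.card A * Nat.card (dotOrthogonal A) = M ^ Nat.card ι :=
  (card_mul_card_dotOrthogonal_le A).antisymm (card_le_card_mul_card_dotOrthogonal A)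

end Counting

section FiberSum

open scoped Classical

variable {R : Type*} [CommSemiring R] {G : Type*} [AddCommGroup G] [Fintype G]
  (K : AddSubgroup G)

noncomputable def fiberSum : (G → R) →ₗ[R] (G ⧸ K → R) where
  toFun v q := ∑ g ∈ Finset.univ.filter fun g : G => (g : G ⧸ K) = q, v g
  map_add' v w := by ext q; simp [Finset.sum_add_distrib]
  map_smul' c v := by ext q; simp [Finset.mul_sum]

theorem fiberSum_dotProduct (u : G → R) (w : G ⧸ K → R) :
    fiberSum K u ⬝ᵥ w = u ⬝ᵥ (w ∘ (↑)) := by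
  simp only [dotProduct, fiberSum, LinearMap.coe_mk, AddHom.coe_mk, Finset.sum_mul,
    Function.comp_apply]
  rw [← Finset.sum_fiberwise Finset.univ (fun g : G => (g : G ⧸ K))]
  refine Finset.sum_congr rfl fun q _ => Finset.sum_congr rfl fun g hg => ?_
  rw [(Finset.mem_filter.mp hg).2]

theorem fiberSum_comp_mk (v : G → R) :
    fiberSum K v ∘ (↑) = ∑ k : K, fun g => v (g + k) := by
  ext g
  simp only [Function.comp_apply, Finset.sum_apply]
  symm
  apply Finset.sum_bij (fun (k : K) _ => g + (k : G))
  · intro k _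
    simp [QuotientAddGroup.eq]
  · intro k _ k' _ h
    simpa using h
  · intro g' hg'
    refine ⟨⟨-g + g', ?_⟩, Finset.mem_univ _, by simp⟩
    simpa [QuotientAddGroup.eq] using (Finset.mem_filter.mp hg').2.symm
  · intro k _
    rfl

theorem fiberSum_pullback (w : G ⧸ K → R) : fiberSum K (w ∘ (↑)) = Nat.card K • w := by
  ext q
  induction q using QuotientAddGroup.induction_on with
  | H g => simpa [Nat.card_eq_fintype_card] using congrFun (fiberSum_comp_mk K (w ∘ (↑))) g

theorem dotOrthogonal_map_fiberSum {A : Submodule R (G → R)} (hA : dotOrthogonal A = A)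
    (htranslate : ∀ v ∈ A, ∀ h : G, (fun g => v (g + h)) ∈ A) (hK : IsUnit (Nat.card K : R)) :
    dotOrthogonal (A.map (fiberSum K)) = A.map (fiberSum K) := by
  apply le_antisymm
  · intro w hw
    have hpull : w ∘ (↑) ∈ A := by
      rw [← hA, mem_dotOrthogonal]
      intro u hu
      rw [← fiberSum_dotProduct]
      exact mem_dotOrthogonal.mp hw _ (Submodule.mem_map_of_mem hu)
    have hsmul : (Nat.card K : R) • w ∈ A.map (fiberSum K) := by
      rw [Nat.cast_smul_eq_nsmul, ← fiberSum_pullback]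
      exact Submodule.mem_map_of_mem hpull
    simpa [smul_smul, hK.unit.inv_mul] using Submodule.smul_mem _ (↑hK.unit⁻¹ : R) hsmul
  · rintro _ ⟨v, hv, rfl⟩
    rw [mem_dotOrthogonal]
    rintro _ ⟨u, hu, rfl⟩
    have hsum : fiberSum K v ∘ (↑) ∈ A := by
      rw [fiberSum_comp_mk]
      exact Submodule.sum_mem _ fun k _ => htranslate v hv k
    rw [fiberSum_dotProduct]
    exact mem_dotOrthogonal.mp (hA.symm ▸ hsum) u hu

end FiberSum

section GroupAlgebra

variable (R : Type*) [CommSemiring R] (G : Type*) [Fintype G]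

noncomputable def coeffEquivFun : AddMonoidAlgebra R G ≃ₗ[R] (G → R) :=
  (coeffLinearEquiv R).trans (Finsupp.linearEquivFunOnFinite R R G)

variable {R G}

@[simp]
theorem coeffEquivFun_apply (u : AddMonoidAlgebra R G) (g : G) :
    coeffEquivFun R G u g = u.coeff g :=
  rfl

@[simp]
theorem coeff_coeffEquivFun_symm (v : G → R) (g : G) :
    ((coeffEquivFun R G).symm v).coeff g = v g :=
  rfl

theorem dotOrthogonal_map_coeffEquivFun {C : Submodule R (AddMonoidAlgebra R G)}
    (hC : ∀ v, v ∈ C ↔ ∀ u ∈ C, ∑ g : G, u.coeff g * v.coeff g = 0) :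
    dotOrthogonal (C.map (coeffEquivFun R G).toLinearMap) =
      C.map (coeffEquivFun R G).toLinearMap := by
  ext v
  rw [Submodule.mem_map_equiv, hC, mem_dotOrthogonal]
  simp only [Submodule.mem_map_equiv, dotProduct, coeff_coeffEquivFun_symm]
  exact (coeffEquivFun R G).symm.toEquiv.forall_congr_right
    (q := fun u => u ∈ C → ∑ g, u.coeff g * v g = 0)

theorem translate_mem_map_coeffEquivFun [AddCommGroup G] (C : Ideal (AddMonoidAlgebra R G))
    {v : G → R} (hv : v ∈ (C.restrictScalars R).map (coeffEquivFun R G).toLinearMap) (h : G) :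
    (fun g => v (g + h)) ∈ (C.restrictScalars R).map (coeffEquivFun R G).toLinearMap := by
  rw [Submodule.mem_map_equiv, Submodule.restrictScalars_mem] at hv ⊢
  have htranslate : (coeffEquivFun R G).symm (fun g => v (g + h)) =
      single (-h) 1 * (coeffEquivFun R G).symm v := by
    apply (coeffEquivFun R G).injective
    ext g
    simp [add_comm]
  rw [htranslate]
  exact C.mul_mem_left _ hv

end GroupAlgebra

theorem Nat.Prime.dvd_of_dvd_card_of_forall_nsmul_eq_zero {X : Type*} [AddGroup X] [Finite X]
    {q n : ℕ} (hq : q.Prime) (hX : ∀ x : X, n • x = 0) (hdvd : q ∣ Nat.card X) : q ∣ n := by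
  have := Fact.mk hq
  obtain ⟨x, hx⟩ := exists_prime_addOrderOf_dvd_card' q hdvd
  exact hx ▸ addOrderOf_dvd_of_nsmul_eq_zero (hX x)

theorem AddCommGroup.exists_addSubgroup_not_dvd_card_card_quotient_eq_pow (G : Type*)
    [AddCommGroup G] [Finite G] {p : ℕ} (hp : p.Prime) :
    ∃ K : AddSubgroup G, ¬ p ∣ Nat.card K ∧ ∃ b, Nat.card (G ⧸ K) = p ^ b := by
  have hG : Nat.card G ≠ 0 := Nat.card_pos.ne'
  set a := (Nat.card G).factorization p
  set m := Nat.card G / p ^ a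
  have hmul : p ^ a * m = Nat.card G := Nat.ordProj_mul_ordCompl_eq_self _ p
  set K := (nsmulAddMonoidHom m : G →+ G).ker
  have hK : ∀ k : K, m • k = 0 := fun k => Subtype.ext k.2
  have hQ : ∀ x : G ⧸ K, p ^ a • x = 0 := by
    rintro ⟨g⟩
    refine (QuotientAddGroup.eq_zero_iff _).mpr ?_
    simp [K, smul_smul, mul_comm m, hmul, card_nsmul_eq_zero']
  refine ⟨K, fun hpK => Nat.not_dvd_ordCompl hp hG
    (hp.dvd_of_dvd_card_of_forall_nsmul_eq_zero hK hpK),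
    _, Nat.eq_prime_pow_of_unique_prime_dvd Nat.card_pos.ne' fun hq hdvd => ?_⟩
  exact (Nat.prime_dvd_prime_iff_eq hq hp).mp
    (hq.dvd_of_dvd_pow (hq.dvd_of_dvd_card_of_forall_nsmul_eq_zero hQ hdvd))

theorem Nat.Prime.even_of_sq_eq_pow {p N e : ℕ} (hp : p.Prime) (h : N ^ 2 = p ^ e) : Even e := by
  have := congrArg (fun m => m.factorization p) h
  simp only [Nat.factorization_pow, hp.factorization_self, Finsupp.smul_apply, smul_eq_mul,
    mul_one] at this
  exact ⟨N.factorization p, by omega⟩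

theorem exists_euclidean_self_dual_ideal_necessary_general
    (p r : ℕ) (hp : p.Prime)
    (G : Type*) [AddCommGroup G] [Fintype G]
    (C : Ideal (AddMonoidAlgebra (ZMod (p ^ r)) G))
    (hC : ∀ v : AddMonoidAlgebra (ZMod (p ^ r)) G,
      v ∈ C ↔ ∀ u ∈ C, ∑ g : G, u.coeff g * v.coeff g = 0) :
    Even r ∨ (p = 2 ∧ Even (Fintype.card G)) := by
  classical
  have : NeZero (p ^ r) := ⟨pow_ne_zero r hp.ne_zero⟩
  obtain ⟨K, hpK, b, hb⟩ :=
    AddCommGroup.exists_addSubgroup_not_dvd_card_card_quotient_eq_pow G hp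
  have hK : IsUnit (Nat.card K : ZMod (p ^ r)) :=
    (ZMod.isUnit_iff_coprime _ _).mpr ((hp.coprime_iff_not_dvd.mpr hpK).symm.pow_right r)
  set A := (C.restrictScalars (ZMod (p ^ r))).map (coeffEquivFun (ZMod (p ^ r)) G).toLinearMap
  have hB : dotOrthogonal (A.map (fiberSum K)) = A.map (fiberSum K) :=
    dotOrthogonal_map_fiberSum K (dotOrthogonal_map_coeffEquivFun hC)
      (fun _ => translate_mem_map_coeffEquivFun C) hK
  have hsq := card_mul_card_dotOrthogonal (A.map (fiberSum K))
  rw [hB, ← sq, ← pow_mul] at hsq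
  rcases Nat.even_mul.mp (hp.even_of_sq_eq_pow hsq) with hr | hQ
  · exact .inl hr
  · have hp2 : p = 2 := hp.even_iff.mp (Nat.even_pow.mp (hb ▸ hQ)).1
    refine .inr ⟨hp2, ?_⟩
    rw [← Nat.card_eq_fintype_card, AddSubgroup.card_eq_card_quotient_mul_card_addSubgroup K]
    exact hQ.mul_right _

/-- If the group ring `(ℤ/p^rℤ)[G]` of a finite abelian group `G` contains a
Euclidean self-dual ideal (with respect to `⟨u,v⟩ = ∑_g u_g v_g`), then `r` is
even, or `p = 2` and `|G|` is even. -/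
theorem exists_euclidean_self_dual_ideal_necessary
    (p r : ℕ) (hp : p.Prime) (hr : 1 ≤ r)
    (G : Type*) [AddCommGroup G] [Fintype G]
    (C : Ideal (AddMonoidAlgebra (ZMod (p ^ r)) G))
    (hC : ∀ v : AddMonoidAlgebra (ZMod (p ^ r)) G,
      v ∈ C ↔ ∀ u ∈ C, ∑ g : G, u.coeff g * v.coeff g = 0) :
    Even r ∨ (p = 2 ∧ Even (Fintype.card G)) :=
  exists_euclidean_self_dual_ideal_necessary_general p r hp G C hC
end

section
/- Let p = 2, r an odd positive integer, r′ = ⌈r/2⌉, and P a finite abelian 2-group containing an element x of order 2. Then the ideal U = 2^{r′}(ℤ/2^r ℤ)[P] + 2^{r′-1}(ℤ/2^r ℤ)[P](Y^x + 1) of the group ring (ℤ/2^r ℤ)[P] is Euclidean self-dual: U = U^⊥ with respect to the form ⟨∑ α_b Y^b, ∑ β_b Y^b⟩ = ∑_b α_b β_b. -/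
/-!
Write `r = 2m + 1` and `R = ℤ/2^r`. Since `U` is spanned over `R` by the translates
`Y^g · 2^{m+1}` and `Y^g · 2^m (Y^x + 1)`, a vector `v` lies in `U^⊥` iff
`2^{m+1} v_g = 0` and `2^m (v_{g+x} + v_g) = 0` for every `g`, i.e. iff `2^m ∣ v_g` and
`2^{m+1} ∣ v_{g+x} + v_g`. On the other hand `v ∈ U` iff its coefficients have the form
`2^{m+1} a_g + 2^m (b_{g-x} + b_g)`. Such coefficients satisfy the divisibility conditions
because `2^{2m+1} = 0`; conversely, as `g ↦ g + x` is a fixed-point-free involution, `b` can be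
chosen to agree with `v / 2^m` on one point of each pair `{g, g + x}` and to vanish on the other.
-/

open AddMonoidAlgebra

theorem Function.Involutive.exists_set_mem_apply_iff_notMem {α : Type*} {σ : α → α}
    (hσ : Function.Involutive σ) (hfix : ∀ a, σ a ≠ a) :
    ∃ T : Set α, ∀ a, σ a ∈ T ↔ a ∉ T := by
  refine ⟨{a | WellOrderingRel a (σ a)}, fun a => ?_⟩
  simp only [Set.mem_ofPred_eq, hσ a]
  rcases trichotomous_of WellOrderingRel a (σ a) with h | h | h
  · exact iff_of_false (asymm h) (not_not_intro h)
  · exact absurd h.symm (hfix a)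
  · exact iff_of_true h (asymm h)

theorem ZMod.pow_mul_eq_zero_iff_pow_dvd {p k l N : ℕ} [NeZero p] (h : k + l = N)
    (a : ZMod (p ^ N)) : (p : ZMod (p ^ N)) ^ k * a = 0 ↔ (p : ZMod (p ^ N)) ^ l ∣ a := by
  subst h
  constructor
  · intro ha
    rw [← ZMod.natCast_zmod_val a, ← Nat.cast_pow, ← Nat.cast_mul,
      ZMod.natCast_eq_zero_iff] at ha
    obtain ⟨c, hc⟩ : p ^ l ∣ a.val := by
      rwa [← mul_dvd_mul_iff_left (pow_ne_zero k (NeZero.ne p)), ← pow_add]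
    exact ⟨c, by rw [← ZMod.natCast_zmod_val a, hc]; push_cast; rfl⟩
  · rintro ⟨c, rfl⟩
    rw [← mul_assoc, ← pow_add, ← Nat.cast_pow, ZMod.natCast_self, zero_mul]

namespace AddMonoidAlgebra

theorem sum_coeff_single_mul {R P : Type*} [Semiring R] [Fintype P] (g : P) (c : R)
    (v : R[P]) : ∑ h, (single g c).coeff h * v.coeff h = c * v.coeff g := by
  rw [Fintype.sum_eq_single g fun h hne => by simp [coeff_single, Finsupp.single_eq_of_ne hne]]
  simp [coeff_single]

variable {R P : Type*} [CommRing R] [AddCommGroup P]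

theorem ofNat_pow_eq_single (n k : ℕ) [n.AtLeastTwo] :
    (ofNat(n) : R[P]) ^ k = single 0 (ofNat(n) ^ k) := by
  rw [ofNat_def, single_pow, smul_zero]

theorem coeff_mul_single_zero_add_mul (α β : R) (x : P) (f h : R[P]) (g : P) :
    (f * single 0 α + h * (single 0 β * (single x 1 + 1))).coeff g =
      α * f.coeff g + β * (h.coeff (g - x) + h.coeff g) := by
  rw [mul_add, mul_one, mul_add, mul_comm (single 0 β), ← mul_assoc, mul_assoc h]
  simp [sub_eq_add_neg]
  ring

theorem mem_span_single_zero_pair_iff [Finite P] (α β : R) (x : P) (v : R[P]) :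
    v ∈ Ideal.span {single 0 α, single 0 β * (single x 1 + 1)} ↔
      ∃ a b : P → R, ∀ g, v.coeff g = α * a g + β * (b (g - x) + b g) := by
  rw [Ideal.mem_span_pair]
  constructor
  · rintro ⟨f, h, rfl⟩
    exact ⟨f.coeff, h.coeff, coeff_mul_single_zero_add_mul α β x f h⟩
  · rintro ⟨a, b, hv⟩
    refine ⟨ofCoeff (Finsupp.equivFunOnFinite.symm a), ofCoeff (Finsupp.equivFunOnFinite.symm b),
      coeff_injective (Finsupp.ext fun g => ?_)⟩
    rw [coeff_mul_single_zero_add_mul, hv]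
    rfl

theorem forall_mem_span_single_zero_pair_sum_coeff_mul_eq_zero_iff [Fintype P]
    (α β : R) (x : P) (v : R[P]) :
    (∀ u ∈ Ideal.span {single 0 α, single 0 β * (single x 1 + 1)},
        ∑ g, u.coeff g * v.coeff g = 0) ↔
      ∀ g, α * v.coeff g = 0 ∧ β * (v.coeff (g + x) + v.coeff g) = 0 := by
  constructor
  · intro hv g
    set I := Ideal.span {single 0 α, single 0 β * (single x 1 + 1)}
    have hα : single g α ∈ I := by
      simpa [single_mul_single] using
        I.mul_mem_left (single g 1) (Ideal.subset_span (Set.mem_insert _ _))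
    have hβ : single (g + x) β + single g β ∈ I := by
      simpa [single_mul_single, ← mul_assoc, mul_add] using
        I.mul_mem_left (single g 1) (Ideal.subset_span (Set.mem_insert_of_mem _ rfl))
    refine ⟨?_, ?_⟩
    · rw [← sum_coeff_single_mul]
      exact hv _ hα
    · rw [mul_add, ← sum_coeff_single_mul, ← sum_coeff_single_mul, ← Finset.sum_add_distrib]
      simpa [add_mul] using hv _ hβ
  · intro hv u hu
    obtain ⟨a, b, hu⟩ := (mem_span_single_zero_pair_iff α β x u).mp hu
    have hshift : ∑ g, b (g - x) * (β * v.coeff g) = ∑ g, b g * (β * v.coeff (g + x)) :=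
      Fintype.sum_equiv (Equiv.subRight x) _ _ fun g => by simp
    calc ∑ g, u.coeff g * v.coeff g
        = ∑ g, a g * (α * v.coeff g) + (∑ g, b (g - x) * (β * v.coeff g) +
            ∑ g, b g * (β * v.coeff g)) := by
          simp only [hu, ← Finset.sum_add_distrib]
          exact Finset.sum_congr rfl fun g _ => by ring
      _ = ∑ g, (a g * (α * v.coeff g) + b g * (β * (v.coeff (g + x) + v.coeff g))) := by
          rw [hshift, ← Finset.sum_add_distrib, ← Finset.sum_add_distrib]
          exact Finset.sum_congr rfl fun g _ => by ring
      _ = 0 := Finset.sum_eq_zero fun g _ => by simp [(hv g).1, (hv g).2]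

end AddMonoidAlgebra

theorem exists_eq_two_pow_mul_add_iff_two_pow_mul_eq_zero {P : Type*} [AddCommGroup P]
    {m : ℕ} {x : P} (hxx : x + x = 0) (hx0 : x ≠ 0) (v : P → ZMod (2 ^ (2 * m + 1))) :
    (∃ a b : P → ZMod (2 ^ (2 * m + 1)),
        ∀ g, v g = 2 ^ (m + 1) * a g + 2 ^ m * (b (g - x) + b g)) ↔
      ∀ g, 2 ^ (m + 1) * v g = 0 ∧ 2 ^ m * (v (g + x) + v g) = 0 := by
  have hsub (g : P) : g - x = g + x := by rw [sub_eq_add_neg, neg_eq_of_add_eq_zero_left hxx]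
  have hN : (2 : ZMod (2 ^ (2 * m + 1))) ^ (2 * m + 1) = 0 := by
    exact_mod_cast ZMod.natCast_self (2 ^ (2 * m + 1))
  constructor
  · rintro ⟨a, b, hv⟩ g
    have hvx := hv (g + x)
    rw [add_sub_cancel_right] at hvx
    rw [hvx, hv g, hsub]
    constructor
    · linear_combination (2 * a g + b (g + x) + b g) * hN
    · linear_combination (a (g + x) + a g + b (g + x) + b g) * hN
  · intro hv
    have hdvd {k l : ℕ} (h : k + l = 2 * m + 1) (a : ZMod (2 ^ (2 * m + 1))) :
        2 ^ k * a = 0 ↔ 2 ^ l ∣ a := by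
      simpa using ZMod.pow_mul_eq_zero_iff_pow_dvd (p := 2) h a
    choose c hc using fun g => (hdvd (k := m + 1) (l := m) (by ring) _).mp (hv g).1
    choose d hd using fun g => (hdvd (k := m) (l := m + 1) (by ring) _).mp (hv g).2
    have hinv : Function.Involutive (· + x) := fun g => by simp [add_assoc, hxx]
    obtain ⟨T, hT⟩ := hinv.exists_set_mem_apply_iff_notMem fun g => by simpa using hx0
    classical
    refine ⟨fun g => if g ∈ T then 0 else d g - c (g + x), fun g => if g ∈ T then c g else 0,
      fun g => ?_⟩
    by_cases hg : g ∈ T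
    · simp [hsub, hg, (hT g).not_left.mpr hg, hc g]
    · simp only [hsub, hg, (hT g).mpr hg, if_true, if_false]
      linear_combination hd g - hc (g + x)

theorem euclidean_self_dual_ideal_construction_general
    (r r' : ℕ) (hrodd : Odd r) (hr' : r' = (r + 1) / 2)
    (P : Type*) [AddCommGroup P] [Fintype P]
    (x : P) (hx : addOrderOf x = 2) :
    ∀ v : AddMonoidAlgebra (ZMod (2 ^ r)) P,
      v ∈ Ideal.span {((2 : AddMonoidAlgebra (ZMod (2 ^ r)) P) ^ r'),
          (2 : AddMonoidAlgebra (ZMod (2 ^ r)) P) ^ (r' - 1) *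
            (AddMonoidAlgebra.single x 1 + 1)} ↔
      ∀ u ∈ Ideal.span {((2 : AddMonoidAlgebra (ZMod (2 ^ r)) P) ^ r'),
          (2 : AddMonoidAlgebra (ZMod (2 ^ r)) P) ^ (r' - 1) *
            (AddMonoidAlgebra.single x 1 + 1)},
        ∑ b : P, u.coeff b * v.coeff b = 0 := by
  obtain ⟨m, rfl⟩ := hrodd
  obtain rfl : r' = m + 1 := by omega
  have hxx : x + x = 0 := by rw [← two_nsmul, ← hx, addOrderOf_nsmul_eq_zero]
  have hx0 : x ≠ 0 := by rintro rfl; simp at hx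
  intro v
  simp only [Nat.add_sub_cancel, ofNat_pow_eq_single]
  rw [forall_mem_span_single_zero_pair_sum_coeff_mul_eq_zero_iff, mem_span_single_zero_pair_iff]
  exact exists_eq_two_pow_mul_add_iff_two_pow_mul_eq_zero hxx hx0 v.coeff

/-- For odd `r`, `r′ = ⌈r/2⌉`, and a finite abelian 2-group `P` containing an
element `x` of order 2, the ideal
`U = 2^{r′}(ℤ/2^rℤ)[P] + 2^{r′-1}(ℤ/2^rℤ)[P](Y^x + 1)` of the group ring
`(ℤ/2^rℤ)[P]` is Euclidean self-dual. -/
theorem euclidean_self_dual_ideal_construction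
    (r r' : ℕ) (hr : 1 ≤ r) (hrodd : Odd r) (hr' : r' = (r + 1) / 2)
    (P : Type*) [AddCommGroup P] [Fintype P]
    (hP : ∃ a : ℕ, Fintype.card P = 2 ^ a)
    (x : P) (hx : addOrderOf x = 2) :
    ∀ v : AddMonoidAlgebra (ZMod (2 ^ r)) P,
      v ∈ Ideal.span {((2 : AddMonoidAlgebra (ZMod (2 ^ r)) P) ^ r'),
          (2 : AddMonoidAlgebra (ZMod (2 ^ r)) P) ^ (r' - 1) *
            (AddMonoidAlgebra.single x 1 + 1)} ↔
      ∀ u ∈ Ideal.span {((2 : AddMonoidAlgebra (ZMod (2 ^ r)) P) ^ r'),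
          (2 : AddMonoidAlgebra (ZMod (2 ^ r)) P) ^ (r' - 1) *
            (AddMonoidAlgebra.single x 1 + 1)},
        ∑ b : P, u.coeff b * v.coeff b = 0 :=
  euclidean_self_dual_ideal_construction_general r r' hrodd hr' P x hx
end

section
/- Let p = 2, r odd, r′ = ⌈r/2⌉, and P a finite abelian 2-group of order 2^a (a ≥ 1) containing an element x of order 2. Then the ideal U = 2^{r′}(ℤ/2^r ℤ)[P] + 2^{r′-1}(ℤ/2^r ℤ)[P](Y^x + 1) has cardinality 2^{r·2^{a-1}}, i.e., |U|^2 = |(ℤ/2^r ℤ)[P]|. -/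
/-!
Write `r = 2t + 1`, so `r' = t + 1`, and put `c = 2^t`; then `U = (2c, c(Y^x + 1))`. An element
`z = ∑ z(p) Y^p` lies in `U` iff `c ∣ z(p)` and `2c ∣ z(p + x) - z(p)` for every `p`: conversely,
splitting `z` over representatives `s` of the cosets of `⟨x⟩` writes it as a sum of terms
`Y^s (z(s) + z(s + x) Y^x)`, each of which is visibly in `U`. Hence `U` is a product, over the
`2^{a-1}` cosets, of copies of `{(α, β) : c ∣ α, 2c ∣ β - α} ⊆ (ℤ/2^r)²`, which has
`2^{r-t} · 2^{r-t-1} = 2^r` elements.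
-/

open AddSubgroup AddMonoidAlgebra

lemma ZMod.card_subtype_natCast_dvd {n d : ℕ} [NeZero n] (hd : d ∣ n) :
    Nat.card {α : ZMod n // (d : ZMod n) ∣ α} = n / d := by
  have hmem : ∀ α : ZMod n, (d : ZMod n) ∣ α ↔ α ∈ zmultiples (d : ZMod n) := fun α => by
    refine ⟨fun ⟨m, hm⟩ => ⟨(m.val : ℤ), ?_⟩, fun ⟨k, hk⟩ => ⟨k, ?_⟩⟩
    · dsimp only
      rw [hm, zsmul_eq_mul, Int.cast_natCast, ZMod.natCast_zmod_val, mul_comm]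
    · dsimp only at hk
      rw [← hk, zsmul_eq_mul, mul_comm]
  rw [Nat.card_congr (Equiv.subtypeEquivRight hmem), Nat.card_zmultiples,
    ZMod.addOrderOf_coe' _ (ne_zero_of_dvd_ne_zero (NeZero.ne n) hd), Nat.gcd_eq_right hd]

lemma card_subtype_dvd_fst_and_dvd_sub {R : Type*} [CommRing R] (a b : R) :
    Nat.card {w : R × R // a ∣ w.1 ∧ b ∣ w.2 - w.1} =
      Nat.card {α : R // a ∣ α} * Nat.card {β : R // b ∣ β} := by
  rw [← Nat.card_prod]
  exact Nat.card_congr <| (Equiv.subtypeEquiv ((Equiv.refl R).prodShear fun α => Equiv.subRight α)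
    fun _ => Iff.rfl).trans (Equiv.subtypeProdEquivProd (q := fun β => b ∣ β))

section CosetPairs

variable {P : Type*} [AddCommGroup P] {x : P}

lemma card_eq_card_quotient_zmultiples_mul_two (hx : addOrderOf x = 2) :
    Nat.card P = Nat.card (P ⧸ zmultiples x) * 2 := by
  rw [card_eq_card_quotient_mul_card_addSubgroup (zmultiples x), Nat.card_zmultiples, hx]

lemma card_quotient_zmultiples_of_card_eq_two_pow (hx : addOrderOf x = 2) {a : ℕ}
    (hP : Nat.card P = 2 ^ a) : Nat.card (P ⧸ zmultiples x) = 2 ^ (a - 1) := by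
  rw [card_eq_card_quotient_zmultiples_mul_two hx] at hP
  cases a with
  | zero => omega
  | succ a => exact Nat.eq_of_mul_eq_mul_right two_pos (by rw [hP, pow_succ]; rfl)

variable [Finite P]

noncomputable def cosetPairEquiv (hx : addOrderOf x = 2) : (P ⧸ zmultiples x) × Fin 2 ≃ P :=
  Equiv.ofBijective (fun qi => qi.1.out + (qi.2 : ℕ) • x) <| by
    refine Function.Injective.bijective_of_nat_card_le ?_ ?_
    · rintro ⟨q, i⟩ ⟨q', j⟩ h
      have hq : q = q' := by
        simpa [QuotientAddGroup.eq_zero_iff, nsmul_mem (mem_zmultiples x)]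
          using congrArg (QuotientAddGroup.mk (s := zmultiples x)) h
      subst hq
      have hij : (i : ℕ) % addOrderOf x = (j : ℕ) % addOrderOf x :=
        nsmul_inj_mod.mp (add_left_cancel h)
      rw [hx] at hij
      exact Prod.ext rfl (Fin.ext (by dsimp only; omega))
    · rw [Nat.card_prod, Nat.card_fin, card_eq_card_quotient_zmultiples_mul_two hx]

variable (hx : addOrderOf x = 2)

lemma cosetPairEquiv_zero (q : P ⧸ zmultiples x) : cosetPairEquiv hx (q, 0) = q.out := by
  simp [cosetPairEquiv]

lemma cosetPairEquiv_one (q : P ⧸ zmultiples x) : cosetPairEquiv hx (q, 1) = q.out + x := by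
  simp [cosetPairEquiv]

lemma cosetPairEquiv_add_right (q : P ⧸ zmultiples x) (i : Fin 2) :
    cosetPairEquiv hx (q, i) + x = cosetPairEquiv hx (q, i + 1) := by
  have hxx : x + x = 0 := by rw [← two_nsmul, ← hx, addOrderOf_nsmul_eq_zero]
  fin_cases i <;> simp [cosetPairEquiv, add_assoc, hxx]

include hx in
theorem card_subtype_forall_add {A : Type*} {W : A → A → Prop} (hW : ∀ α β, W α β → W β α) :
    Nat.card {f : P → A // ∀ p, W (f p) (f (p + x))} =
      Nat.card {w : A × A // W w.1 w.2} ^ Nat.card (P ⧸ zmultiples x) := by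
  have hpair : ∀ φ : Fin 2 → A, (∀ i, W (φ i) (φ (i + 1))) ↔ W (φ 0) (φ 1) := fun φ => by
    simpa [Fin.forall_fin_two] using hW _ _
  calc Nat.card {f : P → A // ∀ p, W (f p) (f (p + x))}
      = Nat.card {g : P ⧸ zmultiples x → Fin 2 → A // ∀ q i, W (g q i) (g q (i + 1))} :=
        Nat.card_congr <| Equiv.subtypeEquiv (((cosetPairEquiv hx).symm.arrowCongr
          (Equiv.refl A)).trans (Equiv.curry _ _ _)) fun f => by
            simp only [← (cosetPairEquiv hx).forall_congr_right, Prod.forall,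
              cosetPairEquiv_add_right]
            rfl
    _ = Nat.card (P ⧸ zmultiples x → {φ : Fin 2 → A // ∀ i, W (φ i) (φ (i + 1))}) :=
        Nat.card_congr (Equiv.subtypePiEquivPi (β := fun _ => Fin 2 → A)
          (p := fun _ φ => ∀ i, W (φ i) (φ (i + 1))))
    _ = _ := by
      rw [Nat.card_fun, Nat.card_congr (Equiv.subtypeEquiv (q := fun w : A × A => W w.1 w.2)
        (piFinTwoEquiv fun _ => A) hpair)]

end CosetPairs

section GroupAlgebra

variable {R : Type*} [CommRing R] {P : Type*} [AddCommGroup P] {x : P}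

lemma coeff_algebraMap_mul (c : R) (z : R[P]) (p : P) :
    (algebraMap R R[P] c * z).coeff p = c * z.coeff p := by
  simp only [coe_algebraMap, Algebra.algebraMap_self, RingHom.coe_id, Function.comp_apply, id_eq,
    coeff_single_mul_apply, neg_zero, zero_add]

lemma coeff_mul_single_add_one (hx : x + x = 0) (z : R[P]) (p : P) :
    (z * (single x 1 + 1)).coeff p = z.coeff (p + x) + z.coeff p := by
  rw [mul_add, mul_one, coeff_add, Finsupp.add_apply, coeff_mul_single_apply, mul_one,
    neg_eq_of_add_eq_zero_left hx]

lemma single_zero_add_single_mem_span {c α β : R} (hα : c ∣ α) (hβ : 2 * c ∣ β - α) :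
    single 0 α + single x β ∈
      Ideal.span {algebraMap R R[P] (2 * c), algebraMap R R[P] c * (single x 1 + 1)} := by
  obtain ⟨m, rfl⟩ := hα
  obtain ⟨k, hk⟩ := hβ
  rw [Ideal.mem_span_pair]
  refine ⟨single x k, algebraMap R R[P] m, ?_⟩
  simp only [coe_algebraMap, Algebra.algebraMap_self, RingHom.coe_id, Function.comp_apply, id_eq,
    single_mul_single, mul_add, one_def, add_zero, zero_add, mul_one]
  rw [show β = k * (2 * c) + m * c by linear_combination hk, single_add, mul_comm c m]
  abel

variable [Finite P] (hx : addOrderOf x = 2)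

include hx in
lemma eq_sum_single_out_mul [Fintype (P ⧸ zmultiples x)] (z : R[P]) :
    z = ∑ q : P ⧸ zmultiples x,
      single q.out 1 * (single 0 (z.coeff q.out) + single x (z.coeff (q.out + x))) := by
  have := Fintype.ofFinite P
  calc z = ∑ p, single p (z.coeff p) := by
        apply coeff_injective
        simp [coeff_sum, coeff_single, Finsupp.univ_sum_single]
    _ = _ := by
      rw [← (cosetPairEquiv hx).sum_comp, Fintype.sum_prod_type]
      simp [cosetPairEquiv_zero, cosetPairEquiv_one, mul_add, single_mul_single]

include hx in
theorem mem_span_iff_forall_dvd_coeff (c : R) (z : R[P]) :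
    z ∈ Ideal.span {algebraMap R R[P] (2 * c), algebraMap R R[P] c * (single x 1 + 1)} ↔
      ∀ p, c ∣ z.coeff p ∧ 2 * c ∣ z.coeff (p + x) - z.coeff p := by
  have hxx : x + x = 0 := by rw [← two_nsmul, ← hx, addOrderOf_nsmul_eq_zero]
  constructor
  · rw [Ideal.mem_span_pair]
    rintro ⟨g, h, rfl⟩ p
    have hcoeff : ∀ p, (g * algebraMap R R[P] (2 * c) +
        h * (algebraMap R R[P] c * (single x 1 + 1))).coeff p =
          2 * c * g.coeff p + c * (h.coeff (p + x) + h.coeff p) := fun p => by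
      rw [coeff_add, Finsupp.add_apply, mul_comm g, mul_left_comm h, coeff_algebraMap_mul,
        coeff_algebraMap_mul, coeff_mul_single_add_one hxx]
    rw [hcoeff, hcoeff, add_assoc p, hxx, add_zero]
    exact ⟨Dvd.intro (2 * g.coeff p + (h.coeff (p + x) + h.coeff p)) (by ring),
      Dvd.intro (g.coeff (p + x) - g.coeff p) (by ring)⟩
  · intro hz
    have := Fintype.ofFinite (P ⧸ zmultiples x)
    rw [eq_sum_single_out_mul hx z]
    exact Ideal.sum_mem _ fun q _ => Ideal.mul_mem_left _ _ <|
      single_zero_add_single_mem_span (hz q.out).1 (hz q.out).2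

include hx in
theorem card_span_two_mul_single_add_one (c : R) :
    Nat.card (Ideal.span {algebraMap R R[P] (2 * c), algebraMap R R[P] c * (single x 1 + 1)}) =
      Nat.card {w : R × R // c ∣ w.1 ∧ 2 * c ∣ w.2 - w.1} ^ Nat.card (P ⧸ zmultiples x) := by
  have hsymm (α β : R) (h : c ∣ α ∧ 2 * c ∣ β - α) : c ∣ β ∧ 2 * c ∣ α - β := by
    refine ⟨?_, by simpa using h.2.neg_right⟩
    simpa using dvd_add h.1 ((dvd_mul_left c 2).trans h.2)
  rw [← card_subtype_forall_add hx (W := fun α β => c ∣ α ∧ 2 * c ∣ β - α) hsymm]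
  exact Nat.card_congr <| Equiv.subtypeEquiv (coeffEquiv.trans Finsupp.equivFunOnFinite)
    (mem_span_iff_forall_dvd_coeff hx c)

end GroupAlgebra

lemma card_subtype_two_pow_dvd_zmod (t : ℕ) :
    Nat.card {w : ZMod (2 ^ (2 * t + 1)) × ZMod (2 ^ (2 * t + 1)) //
      2 ^ t ∣ w.1 ∧ 2 * 2 ^ t ∣ w.2 - w.1} = 2 ^ (2 * t + 1) := by
  have hcast (k : ℕ) : ((2 ^ k : ℕ) : ZMod (2 ^ (2 * t + 1))) = 2 ^ k := by push_cast; rfl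
  rw [card_subtype_dvd_fst_and_dvd_sub, ← pow_succ', ← hcast, ← hcast,
    ZMod.card_subtype_natCast_dvd (pow_dvd_pow 2 (by omega)),
    ZMod.card_subtype_natCast_dvd (pow_dvd_pow 2 (by omega)),
    Nat.pow_div (by omega) two_pos, Nat.pow_div (by omega) two_pos, ← pow_add]
  congr 1
  omega

theorem euclidean_self_dual_ideal_card_general
    (r r' : ℕ) (hrodd : Odd r) (hr' : r' = (r + 1) / 2)
    (a : ℕ)
    (P : Type*) [AddCommGroup P] [Fintype P]
    (hP : Fintype.card P = 2 ^ a)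
    (x : P) (hx : addOrderOf x = 2) :
    Nat.card (Ideal.span {((2 : AddMonoidAlgebra (ZMod (2 ^ r)) P) ^ r'),
        (2 : AddMonoidAlgebra (ZMod (2 ^ r)) P) ^ (r' - 1) *
          (AddMonoidAlgebra.single x 1 + 1)} :
        Ideal (AddMonoidAlgebra (ZMod (2 ^ r)) P)) = 2 ^ (r * 2 ^ (a - 1)) := by
  obtain ⟨t, rfl⟩ := hrodd
  obtain rfl : r' = t + 1 := by omega
  have hgen : (2 : (ZMod (2 ^ (2 * t + 1)))[P]) ^ (t + 1) =
      algebraMap (ZMod (2 ^ (2 * t + 1))) _ (2 * 2 ^ t) := by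
    rw [map_mul, map_pow, map_ofNat]
    ring
  have hc : (2 : (ZMod (2 ^ (2 * t + 1)))[P]) ^ (t + 1 - 1) =
      algebraMap (ZMod (2 ^ (2 * t + 1))) _ (2 ^ t) := by
    rw [map_pow, map_ofNat, Nat.add_sub_cancel]
  rw [hgen, hc, card_span_two_mul_single_add_one hx, card_subtype_two_pow_dvd_zmod,
    card_quotient_zmultiples_of_card_eq_two_pow hx (by rw [Nat.card_eq_fintype_card, hP]),
    pow_mul]

/-- For odd `r`, `r′ = ⌈r/2⌉`, and a finite abelian 2-group `P` of order `2^a`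
(`a ≥ 1`) containing an element `x` of order 2, the ideal
`U = 2^{r′}(ℤ/2^rℤ)[P] + 2^{r′-1}(ℤ/2^rℤ)[P](Y^x + 1)` has cardinality
`2^{r·2^{a-1}}`. -/
theorem euclidean_self_dual_ideal_card
    (r r' : ℕ) (hr : 1 ≤ r) (hrodd : Odd r) (hr' : r' = (r + 1) / 2)
    (a : ℕ) (ha : 1 ≤ a)
    (P : Type*) [AddCommGroup P] [Fintype P]
    (hP : Fintype.card P = 2 ^ a)
    (x : P) (hx : addOrderOf x = 2) :
    Nat.card (Ideal.span {((2 : AddMonoidAlgebra (ZMod (2 ^ r)) P) ^ r'),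
        (2 : AddMonoidAlgebra (ZMod (2 ^ r)) P) ^ (r' - 1) *
          (AddMonoidAlgebra.single x 1 + 1)} :
        Ideal (AddMonoidAlgebra (ZMod (2 ^ r)) P)) = 2 ^ (r * 2 ^ (a - 1)) :=
  euclidean_self_dual_ideal_card_general r r' hrodd hr' a P hP x hx
end

section
/- Let p be a prime, r ≥ 2, s ≥ 1, and G a finite abelian group. If every ideal of the group ring (ℤ/p^r ℤ)[G] is principal, then gcd(p, |G|) = 1. -/
/-!
If `p` divides `|G|`, then `G` surjects onto the nontrivial elementary abelian `p`-group
`Q = G / pG`, so `(ℤ/p^r)[Q]` is again a principal ideal ring. Since `p` is nilpotent in `ℤ/p^r`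
and `(g - 1)^p ∈ p·(ℤ/p^r)[Q]` for `g ∈ Q`, every element of `(ℤ/p^r)[Q]` is a unit or
nilpotent, so this ring is local. In a local ring a principal ideal `(a, b)` forces `a ∣ b` or
`b ∣ a`. For `a = p` and `b = g - 1` with `g ≠ 0` both fail: the coefficient of `g` in `g - 1`
is the unit `1`, not a multiple of `p`, and the augmentation kills `g - 1` but not `p`, as
`r ≥ 2`.
-/

open AddMonoidAlgebra

theorem IsLocalRing.of_isUnit_or_isNilpotent {R : Type*} [CommRing R] [Nontrivial R]
    (h : ∀ a : R, IsUnit a ∨ IsNilpotent a) : IsLocalRing R :=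
  .of_nonunits_add fun a b ha hb ↦
    ((Commute.all a b).isNilpotent_add ((h a).resolve_left ha) ((h b).resolve_left hb)).not_isUnit

theorem IsLocalRing.dvd_or_dvd_of_isPrincipal_span_pair {R : Type*} [CommRing R] [IsLocalRing R]
    {a b : R} (h : (Ideal.span {a, b}).IsPrincipal) : a ∣ b ∨ b ∣ a := by
  obtain ⟨f, hf⟩ := h
  replace hf : Ideal.span {a, b} = Ideal.span {f} := hf
  obtain ⟨u, rfl⟩ : f ∣ a := Ideal.mem_span_singleton.mp (hf ▸ Ideal.subset_span (by simp))
  obtain ⟨v, rfl⟩ : f ∣ b := Ideal.mem_span_singleton.mp (hf ▸ Ideal.subset_span (by simp))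
  obtain ⟨c, d, hcd⟩ := Ideal.mem_span_pair.mp (hf ▸ Ideal.mem_span_singleton_self f)
  by_cases hu : IsUnit u
  · exact .inl (hu.mul_right_dvd.mpr (dvd_mul_right f v))
  by_cases hv : IsUnit v
  · exact .inr (hv.mul_right_dvd.mpr (dvd_mul_right f u))
  -- `f = f * (c * u + d * v)` with `c * u + d * v` in the maximal ideal forces `f = 0`.
  have hunit : IsUnit (1 - (c * u + d * v)) :=
    isUnit_one_sub_self_of_mem_nonunits _
      (nonunits_add (mul_mem_nonunits_right hu) (mul_mem_nonunits_right hv))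
  have hf0 : f = 0 := by
    refine hunit.mul_left_eq_zero.mp ?_
    linear_combination -hcd
  simp [hf0]

theorem isNilpotent_sub_one_of_pow_eq_one {A : Type*} [CommRing A] {p : ℕ} (hp : p.Prime)
    (hpA : IsNilpotent (p : A)) {y : A} (hy : y ^ p = 1) : IsNilpotent (y - 1) := by
  obtain ⟨c, hc⟩ := exists_add_pow_prime_eq hp (y - 1) 1
  have : (y - 1) ^ p = -((p : A) * ((y - 1) * c)) := by
    rw [sub_add_cancel, hy, one_pow] at hc
    linear_combination -hc
  exact .of_pow (this ▸ ((Commute.all _ _).isNilpotent_mul_right hpA).neg)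

theorem ZMod.isUnit_or_isNilpotent_of_prime_pow {p r : ℕ} (hp : p.Prime) (hr : 0 < r)
    (a : ZMod (p ^ r)) : IsUnit a ∨ IsNilpotent a := by
  have : NeZero (p ^ r) := ⟨pow_ne_zero r hp.ne_zero⟩
  rw [← ZMod.natCast_zmod_val a, ZMod.isUnit_natCast_iff_not_dvd_pow hp hr, or_iff_not_imp_left,
    not_not]
  rintro ⟨t, ht⟩
  exact ⟨r, by rw [ht, Nat.cast_mul, mul_pow, ← Nat.cast_pow, ZMod.natCast_self, zero_mul]⟩

namespace AddMonoidAlgebra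

variable (R G : Type*) [CommRing R] [AddCommMonoid G]

noncomputable abbrev augmentation : R[G] →ₐ[R] R := lift R R G 1

@[simp]
theorem augmentation_single (g : G) (r : R) : augmentation R G (single g r) = r := by
  simp

variable {R G}

omit [AddCommMonoid G] in
theorem mapDomain_surjective {H : Type*} {f : G → H} (hf : Function.Surjective f) :
    Function.Surjective (mapDomain (R := R) f) := fun y ↦
  let ⟨x, hx⟩ := Finsupp.mapDomain_surjective hf y.coeff
  ⟨ofCoeff x, by simp [mapDomain, hx]⟩

variable {p : ℕ}

theorem isNilpotent_sub_algebraMap_augmentation (hp : p.Prime) (hpR : IsNilpotent (p : R))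
    (hG : ∀ g : G, p • g = 0) (a : R[G]) :
    IsNilpotent (a - algebraMap R R[G] (augmentation R G a)) := by
  induction a using induction_linear with
  | zero => simp
  | add a b ha hb =>
    rw [map_add, map_add, add_sub_add_comm]
    exact (Commute.all _ _).isNilpotent_add ha hb
  | single g r =>
    have hsingle : single g r - algebraMap R R[G] r = algebraMap R R[G] r * (single g 1 - 1) := by
      rw [mul_sub, mul_one, ← Algebra.smul_def, smul_single', mul_one]
    rw [augmentation_single, hsingle]
    refine (Commute.all _ _).isNilpotent_mul_left (isNilpotent_sub_one_of_pow_eq_one hp ?_ ?_)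
    · simpa using hpR.map (algebraMap R R[G])
    · rw [single_pow, hG, one_pow, one_def]

theorem isUnit_or_isNilpotent (hp : p.Prime) (hpR : IsNilpotent (p : R))
    (hG : ∀ g : G, p • g = 0) (hR : ∀ r : R, IsUnit r ∨ IsNilpotent r) (a : R[G]) :
    IsUnit a ∨ IsNilpotent a := by
  have ha := isNilpotent_sub_algebraMap_augmentation hp hpR hG a
  rw [← sub_add_cancel a (algebraMap R R[G] (augmentation R G a))]
  refine (hR (augmentation R G a)).imp (fun hu ↦ ?_) (fun hn ↦ ?_)
  · exact ha.isUnit_add_right_of_commute (hu.map (algebraMap R R[G])) (Commute.all _ _)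
  · exact (Commute.all _ _).isNilpotent_add ha (hn.map (algebraMap R R[G]))

theorem not_isPrincipalIdealRing [Nontrivial G] (hp : p.Prime) (hpR : IsNilpotent (p : R))
    (hp0 : (p : R) ≠ 0) (hG : ∀ g : G, p • g = 0)
    (hR : ∀ r : R, IsUnit r ∨ IsNilpotent r) :
    ¬ IsPrincipalIdealRing R[G] := by
  intro hPIR
  have : Nontrivial R := nontrivial_of_ne _ _ hp0
  have : IsLocalRing R[G] := .of_isUnit_or_isNilpotent (isUnit_or_isNilpotent hp hpR hG hR)
  obtain ⟨g, hg⟩ := exists_ne (0 : G)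
  rcases IsLocalRing.dvd_or_dvd_of_isPrincipal_span_pair (IsPrincipalIdealRing.principal
    (Ideal.span {(p : R[G]), single g 1 - 1})) with ⟨c, hc⟩ | hdvd
  · have hcoeff : (p : R) * c.coeff g = 1 := by
      simpa [one_def, hg.symm, ← nsmul_eq_mul] using congr_arg (·.coeff g) hc.symm
    exact hpR.not_isUnit (.of_mul_eq_one _ hcoeff)
  · exact hp0 (by simpa using map_dvd (augmentation R G) hdvd)

end AddMonoidAlgebra

namespace AddCommGroup

variable {G : Type*} [AddCommGroup G]

theorem nsmul_eq_zero_of_quotient_range_nsmulAddMonoidHom (n : ℕ)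
    (x : G ⧸ (nsmulAddMonoidHom n : G →+ G).range) : n • x = 0 :=
  QuotientAddGroup.induction_on x fun a ↦ by
    rw [← QuotientAddGroup.mk_nsmul, QuotientAddGroup.eq_zero_iff]
    exact ⟨a, rfl⟩

theorem nontrivial_quotient_range_nsmulAddMonoidHom [Finite G] {p : ℕ} (hp : p.Prime)
    (hdvd : p ∣ Nat.card G) : Nontrivial (G ⧸ (nsmulAddMonoidHom p : G →+ G).range) := by
  have := Fact.mk hp
  obtain ⟨g, hg⟩ := exists_prime_addOrderOf_dvd_card' p hdvd
  rw [QuotientAddGroup.nontrivial_iff, Ne, AddMonoidHom.range_eq_top]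
  intro hsurj
  have hg0 : g = 0 := Finite.injective_iff_surjective.mpr hsurj <| by
    simp [← hg, addOrderOf_nsmul_eq_zero]
  rw [hg0, addOrderOf_zero] at hg
  exact hp.one_lt.ne hg

end AddCommGroup

/-- For `r ≥ 2`, if every ideal of the group ring `(ℤ/p^rℤ)[G]` of a finite
abelian group `G` is principal, then `gcd(p, |G|) = 1`. -/
theorem principal_ideal_group_ring_necessary
    (p r : ℕ) (hp : p.Prime) (hr : 2 ≤ r)
    (G : Type*) [AddCommGroup G] [Fintype G]
    (hPIR : IsPrincipalIdealRing (AddMonoidAlgebra (ZMod (p ^ r)) G)) :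
    Nat.gcd p (Fintype.card G) = 1 := by
  rw [← Nat.Coprime, hp.coprime_iff_not_dvd]
  intro hdvd
  set H := (nsmulAddMonoidHom p : G →+ G).range
  have : Nontrivial (G ⧸ H) :=
    AddCommGroup.nontrivial_quotient_range_nsmulAddMonoidHom hp (by rwa [Nat.card_eq_fintype_card])
  have hpR : IsNilpotent (p : ZMod (p ^ r)) := ⟨r, by rw [← Nat.cast_pow, ZMod.natCast_self]⟩
  have hp0 : (p : ZMod (p ^ r)) ≠ 0 := by
    rw [Ne, ZMod.natCast_eq_zero_iff]
    nth_rw 2 [← pow_one p]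
    rw [Nat.pow_dvd_pow_iff_le_right hp.one_lt]
    omega
  refine AddMonoidAlgebra.not_isPrincipalIdealRing hp hpR hp0
    (AddCommGroup.nsmul_eq_zero_of_quotient_range_nsmulAddMonoidHom (G := G) p)
    (ZMod.isUnit_or_isNilpotent_of_prime_pow hp (by omega)) ?_
  exact IsPrincipalIdealRing.of_surjective (mapDomainRingHom _ (QuotientAddGroup.mk' H))
    (mapDomain_surjective (QuotientAddGroup.mk'_surjective H))
end

section
/- Let p be a prime, r a positive even integer, s ≥ 1, and A a finite abelian group with gcd(p,|A|) = 1 and exponent M. If (M, p^s) is good (i.e., M divides p^{st} + 1 for some t ≥ 1), then the only Euclidean self-dual ideal of GR(p^r,s)[A] is p^{r/2}·GR(p^r,s)[A]. -/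
/-!
Write `σ` for the involution `g ↦ -g` of `R[A]`. The Euclidean form is `⟨u, v⟩ = (u * σ v)₀`, and
`(u * σ v)_h = ⟨u, h * v⟩`, so a self-orthogonal ideal `C` satisfies `u * σ v = 0` for `u, v ∈ C`.
Over the residue field `k = R/(p)`, of order `p^s`, the condition `p^{st} ≡ -1` modulo the exponent
of `A` makes `σ` the `t`-th power of the Frobenius of `k[A]`. Hence `x ↦ x^{p^{st}}` is injective,
`k[A]` is reduced, and `y * σ y = y^{p^{st}+1} = 0` forces `y = 0`.
Now let `r = 2m`. If `p^{m-1} w ∈ C`, then `p^{2m-2} (w * σ w) = 0`, so `w * σ w` and hence `w`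
vanish mod `p`. Iterating gives `C ⊆ (p^m)`. The ideal `(p^m)` is itself self-dual, because
`p^{2m} = 0` and `Ann(p^m) = (p^m)`, so `C = (p^m)`.
-/

open AddMonoidAlgebra Ideal IsLocalRing

theorem CharP.natCast_pow_eq_zero_iff {R : Type*} [Ring R] {p r : ℕ} [CharP R (p ^ r)]
    (hp : 1 < p) (j : ℕ) : (p : R) ^ j = 0 ↔ r ≤ j := by
  rw [← Nat.cast_pow, CharP.cast_eq_zero_iff R (p ^ r), Nat.pow_dvd_pow_iff_le_right hp]

theorem isReduced_of_injective_pow {S : Type*} [MonoidWithZero S] {n : ℕ} (hn : 2 ≤ n)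
    (hinj : Function.Injective fun x : S => x ^ n) : IsReduced S := by
  refine (isReduced_iff_pow_one_lt 2 one_lt_two).mpr fun x hx => hinj ?_
  simp only [zero_pow (by omega : n ≠ 0)]
  rw [← Nat.sub_add_cancel hn, pow_add, hx, mul_zero]

theorem nsmul_eq_neg_of_exponent_dvd {A : Type*} [AddCommGroup A] {n : ℕ}
    (h : AddMonoid.exponent A ∣ n + 1) (a : A) : n • a = -a := by
  refine eq_neg_of_add_eq_zero_left ?_
  rw [← succ_nsmul, AddMonoid.exponent_dvd_iff_forall_nsmul_eq_zero.mp h a]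

namespace IsLocalRing

variable {R : Type*} [CommRing R] [IsLocalRing R] {π : R} {r : ℕ}

theorem pow_sub_dvd_of_mul_pow_eq_zero (hmax : maximalIdeal R = span {π})
    (hπ : ∀ j, π ^ j = 0 ↔ r ≤ j) {i : ℕ} {x : R} (hx : x * π ^ i = 0) : π ^ (r - i) ∣ x := by
  suffices ∀ n ≤ r - i, π ^ n ∣ x from this _ le_rfl
  intro n hn
  induction n with
  | zero => simp
  | succ n ih =>
    obtain ⟨y, rfl⟩ := ih (by omega)
    have hy : y * π ^ (n + i) = 0 := by rw [← hx, pow_add]; ring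
    have hy_mem : y ∈ maximalIdeal R := fun hunit =>
      absurd ((hπ _).mp ((hunit.mul_right_eq_zero).mp hy)) (by omega)
    rw [hmax, mem_span_singleton] at hy_mem
    obtain ⟨z, rfl⟩ := hy_mem
    exact ⟨z, by ring⟩

theorem dvd_of_mul_pow_eq_zero (hmax : maximalIdeal R = span {π})
    (hπ : ∀ j, π ^ j = 0 ↔ r ≤ j) {i : ℕ} (hi : i < r) {x : R} (hx : x * π ^ i = 0) : π ∣ x :=
  (dvd_pow_self π (by omega)).trans (pow_sub_dvd_of_mul_pow_eq_zero hmax hπ hx)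

theorem comap_mulLeft_pow_span_pow_succ (hmax : maximalIdeal R = span {π})
    (hπ : ∀ j, π ^ j = 0 ↔ r ≤ j) {i : ℕ} (hi : i < r) :
    (span {π ^ (i + 1)}).toAddSubgroup.comap (AddMonoidHom.mulLeft (π ^ i)) =
      (span {π}).toAddSubgroup := by
  ext x
  simp only [AddSubgroup.mem_comap, Submodule.mem_toAddSubgroup, AddMonoidHom.coe_mulLeft,
    mem_span_singleton]
  constructor
  · rintro ⟨y, hy⟩
    have : (x - π * y) * π ^ i = 0 := by rw [sub_mul, mul_comm x, hy]; ring
    simpa using (dvd_of_mul_pow_eq_zero hmax hπ hi this).add (dvd_mul_right π y)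
  · rintro ⟨y, rfl⟩
    exact ⟨y, by ring⟩

theorem index_span_pow (hmax : maximalIdeal R = span {π}) (hπ : ∀ j, π ^ j = 0 ↔ r ≤ j)
    {i : ℕ} (hi : i ≤ r) :
    (span {π ^ i}).toAddSubgroup.index = (span {π}).toAddSubgroup.index ^ i := by
  induction i with
  | zero => simp
  | succ i ih =>
    have hrange : (AddMonoidHom.mulLeft (π ^ i)).range = (span {π ^ i}).toAddSubgroup := by
      ext x; simp [mem_span_singleton', mul_comm]
    have hle : (span {π ^ (i + 1)}).toAddSubgroup ≤ (span {π ^ i}).toAddSubgroup :=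
      span_singleton_le_span_singleton.mpr (pow_dvd_pow π i.le_succ)
    rw [← AddSubgroup.relIndex_mul_index hle, ← hrange, ← AddSubgroup.index_comap,
      comap_mulLeft_pow_span_pow_succ hmax hπ (by omega), hrange, ih (by omega), pow_succ']

theorem card_eq_card_quotient_pow (hmax : maximalIdeal R = span {π})
    (hπ : ∀ j, π ^ j = 0 ↔ r ≤ j) : Nat.card R = Nat.card (R ⧸ span {π}) ^ r := by
  have hbot : span {π ^ r} = ⊥ := by simp [(hπ r).mpr le_rfl]
  change _ = (span {π}).toAddSubgroup.index ^ r
  rw [← index_span_pow hmax hπ le_rfl, hbot, Submodule.bot_toAddSubgroup, AddSubgroup.index_bot]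

end IsLocalRing

namespace AddMonoidAlgebra

section FiniteField

variable {K : Type*} [Field K] [Fintype K] {A : Type*} [AddCommGroup A]

theorem frobeniusAlgHom_pow_apply {S : Type*} [CommRing S] [Algebra K S] (t : ℕ) (x : S) :
    (FiniteField.frobeniusAlgHom K S ^ t) x = x ^ Fintype.card K ^ t := by
  rw [AlgHom.coe_pow, FiniteField.coe_frobeniusAlgHom, pow_iterate]

theorem domCongr_neg_apply_eq_pow {t : ℕ} (hA : ∀ a : A, (Fintype.card K ^ t) • a = -a)
    (x : K[A]) : domCongr K K (AddEquiv.neg A) x = x ^ Fintype.card K ^ t := by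
  have : (domCongr K K (AddEquiv.neg A)).toAlgHom = FiniteField.frobeniusAlgHom K K[A] ^ t :=
    algHom_ext (fun a => by simp [frobeniusAlgHom_pow_apply, hA]) (by ext)
  rw [← frobeniusAlgHom_pow_apply, ← this]
  rfl

theorem eq_zero_of_mul_domCongr_neg_eq_zero {t : ℕ} (ht : 1 ≤ t)
    (hA : ∀ a : A, (Fintype.card K ^ t) • a = -a) {y : K[A]}
    (hy : y * domCongr K K (AddEquiv.neg A) y = 0) : y = 0 := by
  have hq : 2 ≤ Fintype.card K ^ t :=
    le_trans Fintype.one_lt_card (Nat.le_self_pow (by omega) _)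
  have : IsReduced K[A] := isReduced_of_injective_pow hq <| by
    simpa [funext (domCongr_neg_apply_eq_pow hA)] using (domCongr K K (AddEquiv.neg A)).injective
  rw [domCongr_neg_apply_eq_pow hA, ← pow_succ'] at hy
  exact IsNilpotent.eq_zero ⟨_, hy⟩

end FiniteField

variable {R : Type*} [CommRing R] {A : Type*} [AddCommGroup A]

theorem coeff_algebraMap_mul (c : R) (x : R[A]) (g : A) :
    (algebraMap R R[A] c * x).coeff g = c * x.coeff g :=
  coeff_single_zero_mul x c g

theorem mapRingHom_domCongr {S : Type*} [CommRing S] (f : R →+* S) (e : A ≃+ A) (x : R[A]) :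
    mapRingHom A f (domCongr R R e x) = domCongr S S e (mapRingHom A f x) := by
  ext; simp [coeff_domCongr]

theorem mapRingHom_mk_eq_zero_iff {I : Ideal R} {x : R[A]} :
    mapRingHom A (Ideal.Quotient.mk I) x = 0 ↔ ∀ g, x.coeff g ∈ I := by
  simp only [AddMonoidAlgebra.ext_iff, Finsupp.ext_iff, coeff_mapRingHom, coeff_zero,
    Finsupp.coe_zero, Pi.zero_apply, Ideal.Quotient.eq_zero_iff_mem]

variable [Fintype A]

def IsEuclideanSelfDual (C : Ideal R[A]) : Prop :=
  ∀ v, v ∈ C ↔ ∀ u ∈ C, ∑ g : A, u.coeff g * v.coeff g = 0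

theorem IsEuclideanSelfDual.eq_of_le {C D : Ideal R[A]} (hC : IsEuclideanSelfDual C)
    (hD : IsEuclideanSelfDual D) (hle : C ≤ D) : C = D :=
  le_antisymm hle fun v hv => (hC v).mpr fun u hu => (hD v).mp hv u (hle hu)

theorem mem_span_algebraMap_iff {c : R} {x : R[A]} :
    x ∈ span {algebraMap R R[A] c} ↔ ∀ g, c ∣ x.coeff g := by
  rw [mem_span_singleton']
  constructor
  · rintro ⟨w, rfl⟩ g
    rw [mul_comm, coeff_algebraMap_mul]
    exact dvd_mul_right c _
  · intro h
    choose w hw using h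
    refine ⟨ofCoeff (Finsupp.equivFunOnFinite.symm w), ?_⟩
    ext g
    rw [mul_comm, coeff_algebraMap_mul, hw g]
    rfl

theorem isEuclideanSelfDual_span_algebraMap {c : R} (hc : c * c = 0)
    (hann : ∀ x, x * c = 0 → c ∣ x) : IsEuclideanSelfDual (span {algebraMap R R[A] c}) := by
  classical
  intro v
  simp only [mem_span_algebraMap_iff]
  constructor
  · intro hv u hu
    refine Finset.sum_eq_zero fun g _ => ?_
    obtain ⟨a, ha⟩ := hu g
    obtain ⟨b, hb⟩ := hv g
    rw [ha, hb, mul_mul_mul_comm, hc, zero_mul]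
  · intro hv g
    have hsingle : ∀ g', c ∣ (single g c : R[A]).coeff g' := fun g' => by
      rw [coeff_single, Finsupp.single_apply]; split_ifs <;> simp
    refine hann _ ?_
    simpa [Finsupp.single_apply, mul_comm] using hv _ hsingle

theorem coeff_mul_domCongr_neg (u v : R[A]) (h : A) :
    (u * domCongr R R (AddEquiv.neg A) v).coeff h =
      ∑ g : A, u.coeff g * (single h 1 * v).coeff g := by
  rw [coeff_mul_apply_left, Finsupp.sum_fintype _ _ (by simp)]
  simp [coeff_domCongr, coeff_single_mul_apply]

theorem mul_domCongr_neg_eq_zero {C : Ideal R[A]}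
    (hC : ∀ u ∈ C, ∀ v ∈ C, ∑ g : A, u.coeff g * v.coeff g = 0) {u v : R[A]}
    (hu : u ∈ C) (hv : v ∈ C) : u * domCongr R R (AddEquiv.neg A) v = 0 := by
  ext h
  rw [coeff_mul_domCongr_neg]
  exact hC u hu _ (C.mul_mem_left _ hv)

section ChainRing

variable [IsLocalRing R] {π : R} {m : ℕ}

theorem dvd_coeff_of_algebraMap_pow_mul_mem (hmax : maximalIdeal R = span {π})
    (hπ : ∀ j, π ^ j = 0 ↔ m + m ≤ j)
    (hred : ∀ y : (R ⧸ span {π})[A],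
      y * domCongr (R ⧸ span {π}) (R ⧸ span {π}) (AddEquiv.neg A) y = 0 → y = 0)
    {C : Ideal R[A]} (hC : ∀ u ∈ C, ∀ v ∈ C, ∑ g : A, u.coeff g * v.coeff g = 0) {w : R[A]}
    (hw : algebraMap R R[A] (π ^ (m - 1)) * w ∈ C) (g : A) : π ∣ w.coeff g := by
  set σ := domCongr R R (AddEquiv.neg A)
  have hm : 1 ≤ m := by by_contra! h; simpa using (hπ 0).mpr (by omega)
  have hprod : algebraMap R R[A] (π ^ (m - 1 + (m - 1))) * (w * σ w) = 0 := by
    rw [← mul_domCongr_neg_eq_zero hC hw hw, map_mul, AlgEquiv.commutes, pow_add, map_mul]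
    ring
  have hπ_dvd : ∀ h, π ∣ (w * σ w).coeff h := fun h => by
    refine dvd_of_mul_pow_eq_zero hmax hπ (i := m - 1 + (m - 1)) (by omega) ?_
    rw [mul_comm, ← coeff_algebraMap_mul, hprod, coeff_zero, Finsupp.coe_zero, Pi.zero_apply]
  have hbar := mapRingHom_mk_eq_zero_iff.mpr fun h => mem_span_singleton.mpr (hπ_dvd h)
  rw [map_mul, mapRingHom_domCongr] at hbar
  exact mem_span_singleton.mp (mapRingHom_mk_eq_zero_iff.mp (hred _ hbar) g)

theorem le_span_algebraMap_pow_of_forall_sum_coeff_mul_eq_zero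
    (hmax : maximalIdeal R = span {π}) (hπ : ∀ j, π ^ j = 0 ↔ m + m ≤ j)
    (hred : ∀ y : (R ⧸ span {π})[A],
      y * domCongr (R ⧸ span {π}) (R ⧸ span {π}) (AddEquiv.neg A) y = 0 → y = 0)
    {C : Ideal R[A]} (hC : ∀ u ∈ C, ∀ v ∈ C, ∑ g : A, u.coeff g * v.coeff g = 0) :
    C ≤ span {algebraMap R R[A] (π ^ m)} := by
  intro u hu
  suffices ∀ i ≤ m, algebraMap R R[A] (π ^ i) ∣ u from mem_span_singleton.mpr (this m le_rfl)
  intro i hi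
  induction i with
  | zero => rw [pow_zero, map_one]; exact one_dvd u
  | succ i ih =>
    obtain ⟨w, rfl⟩ := ih (by omega)
    have hw : algebraMap R R[A] (π ^ (m - 1)) * w ∈ C := by
      rw [show m - 1 = m - 1 - i + i by omega, pow_add, map_mul, mul_assoc]
      exact C.mul_mem_left _ hu
    have hπw : algebraMap R R[A] π ∣ w := mem_span_singleton.mp <| mem_span_algebraMap_iff.mpr <|
      dvd_coeff_of_algebraMap_pow_mul_mem hmax hπ hred hC hw
    rw [pow_succ, map_mul]
    exact mul_dvd_mul_left _ hπw

end ChainRing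

end AddMonoidAlgebra

theorem unique_euclidean_self_dual_abelian_code_general
    (p r s : ℕ) (hp : p.Prime) (hr : 1 ≤ r) (hreven : Even r)
    (R : Type*) [CommRing R] [Fintype R] [IsLocalRing R]
    (hchar : CharP R (p ^ r)) (hcard : Fintype.card R = p ^ (r * s))
    (hmax : IsLocalRing.maximalIdeal R = Ideal.span {(p : R)})
    (A : Type*) [AddCommGroup A] [Fintype A]
    (M : ℕ) (hM : M = AddMonoid.exponent A)
    (hgood : ∃ t : ℕ, 1 ≤ t ∧ M ∣ p ^ (s * t) + 1) :
    ∀ C : Ideal (AddMonoidAlgebra R A),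
      (∀ v : AddMonoidAlgebra R A,
        v ∈ C ↔ ∀ u ∈ C, ∑ g : A, u.coeff g * v.coeff g = 0) ↔
      C = Ideal.span {((p : AddMonoidAlgebra R A) ^ (r / 2))} := by
  obtain ⟨t, ht, hdvd⟩ := hgood
  obtain ⟨m, rfl⟩ := hreven
  have hpow : ∀ j, (p : R) ^ j = 0 ↔ m + m ≤ j := CharP.natCast_pow_eq_zero_iff hp.one_lt
  have : (span {(p : R)}).IsMaximal := hmax ▸ maximalIdeal.isMaximal R
  let _ := Ideal.Quotient.field (span {(p : R)})
  let _ : Fintype (R ⧸ span {(p : R)}) := Fintype.ofFinite _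
  have hk : Fintype.card (R ⧸ span {(p : R)}) = p ^ s := by
    have hcard_pow := card_eq_card_quotient_pow hmax hpow
    rw [Nat.card_eq_fintype_card, Nat.card_eq_fintype_card, hcard, mul_comm, pow_mul] at hcard_pow
    exact Nat.pow_left_injective (by omega) hcard_pow.symm
  have hred (y) := eq_zero_of_mul_domCongr_neg_eq_zero (y := y) ht fun a => by
    rw [hk, ← pow_mul]; exact nsmul_eq_neg_of_exponent_dvd (hM ▸ hdvd) a
  have hD : IsEuclideanSelfDual (span {algebraMap R R[A] ((p : R) ^ m)}) :=
    isEuclideanSelfDual_span_algebraMap (by rw [← pow_add, hpow]) fun x hx => by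
      simpa using pow_sub_dvd_of_mul_pow_eq_zero hmax hpow hx
  have hgen : (p : R[A]) ^ ((m + m) / 2) = algebraMap R R[A] ((p : R) ^ m) := by
    rw [map_pow, map_natCast, show (m + m) / 2 = m by omega]
  intro C
  rw [hgen]
  refine ⟨fun hC => IsEuclideanSelfDual.eq_of_le hC hD ?_, fun h => h ▸ hD⟩
  exact le_span_algebraMap_pow_of_forall_sum_coeff_mul_eq_zero hmax hpow hred
    fun u hu v hv => (hC v).mp hv u hu

/-- For `r` even and a finite abelian group `A` of exponent `M` with
`gcd(p,|A|) = 1`, if `(M, p^s)` is good (i.e. `M ∣ p^{st} + 1` for some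
`t ≥ 1`), then the only Euclidean self-dual ideal of the group ring
`GR(p^r,s)[A]` is `p^{r/2}·GR(p^r,s)[A]`. -/
theorem unique_euclidean_self_dual_abelian_code
    (p r s : ℕ) (hp : p.Prime) (hr : 1 ≤ r) (hreven : Even r) (hs : 1 ≤ s)
    (R : Type*) [CommRing R] [Fintype R] [IsLocalRing R]
    (hchar : CharP R (p ^ r)) (hcard : Fintype.card R = p ^ (r * s))
    (hmax : IsLocalRing.maximalIdeal R = Ideal.span {(p : R)})
    (A : Type*) [AddCommGroup A] [Fintype A]
    (hA : ¬ p ∣ Fintype.card A)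
    (M : ℕ) (hM : M = AddMonoid.exponent A)
    (hgood : ∃ t : ℕ, 1 ≤ t ∧ M ∣ p ^ (s * t) + 1) :
    ∀ C : Ideal (AddMonoidAlgebra R A),
      (∀ v : AddMonoidAlgebra R A,
        v ∈ C ↔ ∀ u ∈ C, ∑ g : A, u.coeff g * v.coeff g = 0) ↔
      C = Ideal.span {((p : AddMonoidAlgebra R A) ^ (r / 2))} :=
  unique_euclidean_self_dual_abelian_code_general p r s hp hr hreven R hchar hcard hmax A M hM hgood
end
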